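/- The function (ξ,λ) ↦ (1+ξ)^{−(n+2)} is integrable on the Heisenberg fan Σ with respect to the Plancherel measure μ; consequently there is a constant C such that ‖ψ‖_{L¹(Σ,μ)} ≤ C · sup_{(ξ,λ)∈ℝ²} (1+|ξ|)^{n+2} |ψ(ξ,λ)| for every Schwartz function ψ on ℝ². -/

import Mathlib

/-!
Since `C(j+n-1, j) ≤ (2j+n)^(n-1)`, the `j`-th summand of the density is at most
`(2j+n)⁻¹ (1 + (2j+n)|λ|)⁻²`, a rescaling of the integrable function `(1+|x|)⁻²` whose integral
is `(2j+n)⁻² ∫ (1+|x|)⁻²`; these are summable in `j`, so the density is integrable by monotone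
convergence. For a Schwartz function, `|ψ(ξ,λ)| ≤ M (1+ξ)^{-(n+2)}` with `M` the weighted
supremum, which is finite, so `‖ψ‖_{L¹(Σ,μ)}` is at most `M` times the integral just bounded.
-/

open MeasureTheory

noncomputable section

variable (n : ℕ)

/-- The `L¹` norm on the Heisenberg fan `Σ` with respect to the Plancherel
measure `μ`, computed for a function on `ℝ²` via
`∫_Σ |ψ| dμ = (2π)^{−(n+1)} ∫_ℝ Σⱼ C(j+n−1,j) |ψ(|λ|(2j+n), λ)| |λ|ⁿ dλ`. -/
def fanL1Norm (ψ : ℝ × ℝ → ℂ) : ℝ :=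
  (2 * Real.pi) ^ (-((n : ℤ) + 1)) *
    ∫ lam : ℝ, ∑' j : ℕ, ((j + n - 1).choose j : ℝ) *
      ‖ψ (|lam| * (2 * j + n), lam)‖ * |lam| ^ n

theorem MeasureTheory.integrable_tsum_of_nonneg {α ι : Type*} [MeasurableSpace α] [Countable ι]
    {μ : Measure α} {f : ι → α → ℝ} (hf : ∀ i, Integrable (f i) μ) (hf_nonneg : ∀ i x, 0 ≤ f i x)
    (hf_sum : ∀ x, Summable fun i ↦ f i x) (h_int : Summable fun i ↦ ∫ x, f i x ∂μ) :
    Integrable (fun x ↦ ∑' i, f i x) μ := by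
  have h_toReal : (fun x ↦ ∑' i, f i x) = fun x ↦ (∑' i, ENNReal.ofReal (f i x)).toReal := by
    funext x
    rw [← ENNReal.ofReal_tsum_of_nonneg (hf_nonneg · x) (hf_sum x),
      ENNReal.toReal_ofReal (tsum_nonneg (hf_nonneg · x))]
  rw [h_toReal]
  refine integrable_toReal_of_lintegral_ne_top
    (AEMeasurable.tsum fun i ↦ (hf i).aemeasurable.ennreal_ofReal) ?_
  rw [lintegral_tsum fun i ↦ (hf i).aemeasurable.ennreal_ofReal]
  simp_rw [← ofReal_integral_eq_lintegral_ofReal (hf _) (ae_of_all _ (hf_nonneg _)),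
    ← ENNReal.ofReal_tsum_of_nonneg (fun i ↦ integral_nonneg (hf_nonneg i)) h_int]
  exact ENNReal.ofReal_ne_top

theorem SchwartzMap.bddAbove_range_one_add_norm_pow_mul_norm {E F : Type*}
    [NormedAddCommGroup E] [NormedSpace ℝ E] [NormedAddCommGroup F] [NormedSpace ℝ F]
    (f : SchwartzMap E F) (k : ℕ) : BddAbove (Set.range fun x ↦ (1 + ‖x‖) ^ k * ‖f x‖) := by
  refine ⟨2 ^ k * (Finset.Iic (k, 0)).sup (fun m ↦ SchwartzMap.seminorm ℝ m.1 m.2) f, ?_⟩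
  rintro _ ⟨x, rfl⟩
  simpa using one_add_le_sup_seminorm_apply (𝕜 := ℝ) (m := (k, 0)) le_rfl le_rfl f x

theorem Nat.choose_add_sub_one_le_pow {n : ℕ} (hn : 1 ≤ n) (j : ℕ) :
    (j + n - 1).choose j ≤ (2 * j + n) ^ (n - 1) := by
  calc (j + n - 1).choose j = (j + n - 1).choose (n - 1) := by
        rw [show j + n - 1 = j + (n - 1) by omega, Nat.choose_symm_add]
    _ ≤ (j + n - 1) ^ (n - 1) := Nat.choose_le_pow _ _
    _ ≤ (2 * j + n) ^ (n - 1) := Nat.pow_le_pow_left (by omega) _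

theorem pow_mul_inv_one_add_pow_le {t : ℝ} (ht : 0 ≤ t) (n : ℕ) :
    t ^ n * ((1 + t) ^ (n + 2))⁻¹ ≤ ((1 + t) ^ 2)⁻¹ := by
  rw [pow_add, mul_inv, ← mul_assoc]
  refine mul_le_of_le_one_left (by positivity) ?_
  rw [← div_eq_mul_inv, div_le_one (by positivity)]
  exact pow_le_pow_left₀ ht (by linarith) n

theorem summable_inv_two_mul_add_sq {n : ℕ} (hn : 1 ≤ n) :
    Summable fun j : ℕ ↦ ((2 * j + n : ℝ) ^ 2)⁻¹ := by
  have h_shift : Summable fun j : ℕ ↦ (((j + 1 : ℕ) : ℝ) ^ 2)⁻¹ :=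
    (summable_nat_add_iff 1).mpr (Real.summable_nat_pow_inv.mpr one_lt_two)
  refine h_shift.of_nonneg_of_le (fun j ↦ by positivity) fun j ↦ ?_
  have : (1 : ℝ) ≤ n := by exact_mod_cast hn
  gcongr
  push_cast
  linarith [(j.cast_nonneg : (0 : ℝ) ≤ j)]

theorem integrable_inv_one_add_abs_sq : Integrable fun x : ℝ ↦ ((1 + |x|) ^ 2)⁻¹ := by
  refine (integrable_one_add_norm (E := ℝ) (μ := volume) (r := 2) (by simp)).congr
    (ae_of_all _ fun x ↦ ?_)
  simp [Real.rpow_neg (by positivity : (0 : ℝ) ≤ 1 + |x|)]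

/-- The `j`-th summand of the Plancherel density of `(ξ, λ) ↦ (1 + ξ)^{-(n+2)}`. -/
def fanDecayTerm (j : ℕ) (lam : ℝ) : ℝ :=
  ((j + n - 1).choose j : ℝ) * (1 + |lam| * (2 * j + n)) ^ (-((n : ℤ) + 2)) * |lam| ^ n

theorem fanDecayTerm_eq (j : ℕ) (lam : ℝ) : fanDecayTerm n j lam =
    ((j + n - 1).choose j : ℝ) * ((1 + |lam| * (2 * j + n)) ^ (n + 2))⁻¹ * |lam| ^ n := by
  rw [fanDecayTerm, show -((n : ℤ) + 2) = -((n + 2 : ℕ) : ℤ) by push_cast; ring, zpow_neg,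
    zpow_natCast]

theorem fanDecayTerm_nonneg (j : ℕ) (lam : ℝ) : 0 ≤ fanDecayTerm n j lam := by
  rw [fanDecayTerm_eq]; positivity

theorem continuous_fanDecayTerm (j : ℕ) : Continuous (fanDecayTerm n j) := by
  unfold fanDecayTerm
  refine (continuous_const.mul ((by fun_prop : Continuous fun lam : ℝ ↦
    1 + |lam| * (2 * j + n)).zpow₀ _ fun lam ↦ Or.inl ?_)).mul (by fun_prop)
  positivity

theorem fanDecayTerm_le {n : ℕ} (hn : 1 ≤ n) (j : ℕ) (lam : ℝ) :
    fanDecayTerm n j lam ≤ (2 * j + n : ℝ)⁻¹ * ((1 + |(2 * j + n : ℝ) * lam|) ^ 2)⁻¹ := by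
  have h_choose : ((j + n - 1).choose j : ℝ) ≤ (2 * j + n : ℝ) ^ (n - 1) := by
    exact_mod_cast Nat.choose_add_sub_one_le_pow hn j
  rw [fanDecayTerm_eq]
  set a : ℝ := 2 * j + n
  have ha : 0 < a := by positivity
  clear_value a
  have h_pow : a ^ (n - 1) * |lam| ^ n = a⁻¹ * (|lam| * a) ^ n := by
    obtain ⟨m, rfl⟩ := Nat.exists_eq_add_of_le' hn
    rw [Nat.add_sub_cancel]
    field_simp
    ring
  rw [abs_mul, abs_of_pos ha, mul_comm a]
  calc ((j + n - 1).choose j : ℝ) * ((1 + |lam| * a) ^ (n + 2))⁻¹ * |lam| ^ n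
      ≤ a ^ (n - 1) * |lam| ^ n * ((1 + |lam| * a) ^ (n + 2))⁻¹ := by
        rw [mul_right_comm]; gcongr
    _ = a⁻¹ * ((|lam| * a) ^ n * ((1 + |lam| * a) ^ (n + 2))⁻¹) := by rw [h_pow, mul_assoc]
    _ ≤ a⁻¹ * ((1 + |lam| * a) ^ 2)⁻¹ := by
        gcongr; exact pow_mul_inv_one_add_pow_le (by positivity) n

theorem integrable_fanDecayTerm {n : ℕ} (hn : 1 ≤ n) (j : ℕ) :
    Integrable (fanDecayTerm n j) := by
  have ha : (2 * j + n : ℝ) ≠ 0 := by positivity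
  refine ((integrable_inv_one_add_abs_sq.comp_mul_left' ha).const_mul (2 * j + n : ℝ)⁻¹).mono'
    (continuous_fanDecayTerm n j).aestronglyMeasurable (ae_of_all _ fun lam ↦ ?_)
  rw [Real.norm_of_nonneg (fanDecayTerm_nonneg n j lam)]
  exact fanDecayTerm_le hn j lam

theorem integral_fanDecayTerm_le {n : ℕ} (hn : 1 ≤ n) (j : ℕ) :
    ∫ lam, fanDecayTerm n j lam ≤
      (∫ x : ℝ, ((1 + |x|) ^ 2)⁻¹) * ((2 * j + n : ℝ) ^ 2)⁻¹ := by
  have ha : (0 : ℝ) < 2 * j + n := by positivity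
  calc ∫ lam, fanDecayTerm n j lam
      ≤ ∫ lam, (2 * j + n : ℝ)⁻¹ * ((1 + |(2 * j + n : ℝ) * lam|) ^ 2)⁻¹ :=
        integral_mono (integrable_fanDecayTerm hn j)
          ((integrable_inv_one_add_abs_sq.comp_mul_left' ha.ne').const_mul _)
          (fanDecayTerm_le hn j)
    _ = (∫ x : ℝ, ((1 + |x|) ^ 2)⁻¹) * ((2 * j + n : ℝ) ^ 2)⁻¹ := by
        rw [integral_const_mul, Measure.integral_comp_mul_left (fun x ↦ ((1 + |x|) ^ 2)⁻¹),
          abs_of_pos (inv_pos.mpr ha), smul_eq_mul, ← mul_assoc, ← mul_inv, ← sq, mul_comm]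

theorem summable_fanDecayTerm {n : ℕ} (hn : 1 ≤ n) (lam : ℝ) :
    Summable fun j ↦ fanDecayTerm n j lam := by
  rcases eq_or_ne lam 0 with rfl | hlam
  · simp [fanDecayTerm, zero_pow (by omega : n ≠ 0)]
  refine ((summable_inv_two_mul_add_sq hn).mul_left (|lam| ^ 2)⁻¹).of_nonneg_of_le
    (fanDecayTerm_nonneg n · lam) fun j ↦ (fanDecayTerm_le hn j lam).trans ?_
  have ha : (1 : ℝ) ≤ 2 * j + n := by
    have : (1 : ℝ) ≤ n := by exact_mod_cast hn
    linarith [(j.cast_nonneg : (0 : ℝ) ≤ j)]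
  calc (2 * j + n : ℝ)⁻¹ * ((1 + |(2 * j + n : ℝ) * lam|) ^ 2)⁻¹
      ≤ 1 * (|(2 * j + n : ℝ) * lam| ^ 2)⁻¹ := by
        gcongr
        · exact inv_le_one_of_one_le₀ ha
        · linarith
    _ = (|lam| ^ 2)⁻¹ * ((2 * j + n : ℝ) ^ 2)⁻¹ := by
        rw [abs_mul, abs_of_pos (by positivity), mul_pow, mul_inv, one_mul, mul_comm]

theorem integrable_tsum_fanDecayTerm {n : ℕ} (hn : 1 ≤ n) :
    Integrable fun lam ↦ ∑' j, fanDecayTerm n j lam :=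
  integrable_tsum_of_nonneg (integrable_fanDecayTerm hn) (fanDecayTerm_nonneg n)
    (summable_fanDecayTerm hn) <|
    ((summable_inv_two_mul_add_sq hn).mul_left _).of_nonneg_of_le
      (fun j ↦ integral_nonneg (fanDecayTerm_nonneg n j)) (integral_fanDecayTerm_le hn)

theorem fanL1Norm_le {n : ℕ} (hn : 1 ≤ n) (φ : ℝ × ℝ → ℂ) {M : ℝ}
    (hM : ∀ p : ℝ × ℝ, (1 + |p.1|) ^ (n + 2) * ‖φ p‖ ≤ M) :
    fanL1Norm n φ ≤
      (2 * Real.pi) ^ (-((n : ℤ) + 1)) * (∫ lam, ∑' j, fanDecayTerm n j lam) * M := by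
  have h_term : ∀ (j : ℕ) (lam : ℝ), ((j + n - 1).choose j : ℝ) *
      ‖φ (|lam| * (2 * j + n), lam)‖ * |lam| ^ n ≤ M * fanDecayTerm n j lam := by
    intro j lam
    set ξ : ℝ := |lam| * (2 * j + n)
    have h_decay : ‖φ (ξ, lam)‖ ≤ M * ((1 + ξ) ^ (n + 2))⁻¹ := by
      rw [← div_eq_mul_inv, le_div_iff₀' (by positivity)]
      simpa [abs_of_nonneg (by positivity : 0 ≤ ξ)] using hM (ξ, lam)
    rw [fanDecayTerm_eq]
    calc ((j + n - 1).choose j : ℝ) * ‖φ (ξ, lam)‖ * |lam| ^ n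
        ≤ ((j + n - 1).choose j : ℝ) * (M * ((1 + ξ) ^ (n + 2))⁻¹) * |lam| ^ n := by
          gcongr
      _ = M * (((j + n - 1).choose j : ℝ) * ((1 + ξ) ^ (n + 2))⁻¹ * |lam| ^ n) := by ring
  have h_sum : ∀ lam : ℝ, ∑' j : ℕ, ((j + n - 1).choose j : ℝ) *
      ‖φ (|lam| * (2 * j + n), lam)‖ * |lam| ^ n ≤ M * ∑' j, fanDecayTerm n j lam := by
    intro lam
    have h_dom := (summable_fanDecayTerm hn lam).mul_left M
    rw [← tsum_mul_left]
    exact (h_dom.of_nonneg_of_le (fun j ↦ by positivity) (h_term · lam)).tsum_le_tsum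
      (h_term · lam) h_dom
  rw [fanL1Norm, mul_assoc]
  gcongr
  calc _ ≤ ∫ lam, M * ∑' j, fanDecayTerm n j lam :=
        integral_mono_of_nonneg (ae_of_all _ fun lam ↦ tsum_nonneg fun j ↦ by positivity)
          ((integrable_tsum_fanDecayTerm hn).const_mul M) (ae_of_all _ h_sum)
    _ = _ := by rw [integral_const_mul, mul_comm]

/-- `(ξ,λ) ↦ (1+ξ)^{−(n+2)}` is integrable on the Heisenberg fan with respect
to the Plancherel measure, and consequently the `L¹(Σ,μ)` norm of any Schwartz
function `ψ` on `ℝ²` is bounded by a constant times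
`sup_{(ξ,λ)} (1+|ξ|)^{n+2} |ψ(ξ,λ)|`. -/
theorem fan_plancherel_integrability (hn : 1 ≤ n) :
    Integrable (fun lam : ℝ => ∑' j : ℕ, ((j + n - 1).choose j : ℝ) *
        (1 + |lam| * (2 * j + n)) ^ (-((n : ℤ) + 2)) * |lam| ^ n) volume ∧
    ∃ C : ℝ, 0 < C ∧ ∀ ψ : SchwartzMap (ℝ × ℝ) ℂ,
      fanL1Norm n (fun p => ψ p) ≤
        C * ⨆ p : ℝ × ℝ, (1 + |p.1|) ^ (n + 2) * ‖ψ p‖ := by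
  set I := ∫ lam, ∑' j, fanDecayTerm n j lam
  set c := (2 * Real.pi) ^ (-((n : ℤ) + 1))
  have hc : 0 < c := zpow_pos (by positivity) _
  have hI : 0 ≤ I := integral_nonneg fun lam ↦ tsum_nonneg (fanDecayTerm_nonneg n · lam)
  refine ⟨integrable_tsum_fanDecayTerm hn, c * I + 1, by positivity, fun ψ ↦ ?_⟩
  have h_bdd : BddAbove (Set.range fun p : ℝ × ℝ ↦ (1 + |p.1|) ^ (n + 2) * ‖ψ p‖) :=
    (ψ.bddAbove_range_one_add_norm_pow_mul_norm (n + 2)).range_mono _ fun p ↦ by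
      gcongr; simpa using norm_fst_le p
  set M := ⨆ p : ℝ × ℝ, (1 + |p.1|) ^ (n + 2) * ‖ψ p‖
  have hM : ∀ p : ℝ × ℝ, (1 + |p.1|) ^ (n + 2) * ‖ψ p‖ ≤ M := le_ciSup h_bdd
  have hM_nonneg : 0 ≤ M := le_trans (by positivity) (hM 0)
  calc fanL1Norm n (fun p ↦ ψ p) ≤ c * I * M := fanL1Norm_le hn _ hM
    _ ≤ (c * I + 1) * M := by gcongr; linarith
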